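/- arXiv:2311.06901 — 2 statements merged into one kernel-verified Lean document; each statement's English description precedes it below -/
import Mathlib

section
/- Let I be a nonempty set of non-negative integers and let S be an ideal extension of ℕ^(I). Suppose that for every s, t ∈ S with s ≤ t one has ℓ(s) ≤ ℓ(t). Then S is a gap absorbing monoid. -/
open Pointwise

section Defs

variable {M : Type*} [AddCommMonoid M] [PartialOrder M]

/-- `S* = S \ {0}`. -/
def Sstar (S : AddSubmonoid M) : Set M := (S : Set M) \ {0}

/-- The set of gaps `H(S)`, the complement of `S`. -/
def Gaps (S : AddSubmonoid M) : Set M := (S : Set M)ᶜ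

/-- The set of atoms `A(S) = S* \ (S* + S*)`. -/
def Atoms (S : AddSubmonoid M) : Set M := Sstar S \ (Sstar S + Sstar S)

/-- `S` is an ideal extension: `S* + M ⊆ S*`. -/
def IsIdealExtension (S : AddSubmonoid M) : Prop :=
  ∀ s ∈ Sstar S, ∀ x : M, s + x ∈ Sstar S

/-- `S` is gap absorbing. -/
def IsGapAbsorbing (S : AddSubmonoid M) : Prop :=
  Gaps S + Gaps S ⊆ Gaps S ∪ Atoms S ∪ (Atoms S + Atoms S) ∧
  Gaps S + Atoms S ⊆ Atoms S ∪ (Atoms S + Atoms S)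

/-- `M(S)`: minimal elements of `S*` with respect to `≤`. -/
def Mins (S : AddSubmonoid M) : Set M :=
  {m | m ∈ Sstar S ∧ ∀ t ∈ Sstar S, t ≤ m → t = m}

/-- `n`-fold sumset, with `0`-fold sumset `{0}`. -/
def nfold : ℕ → Set M → Set M
  | 0, _ => {0}
  | n + 1, X => nfold n X + X

/-- The set of lengths `L(s) = {n : s ∈ nA(S)}`. -/
def Lset (S : AddSubmonoid M) (s : M) : Set ℕ := {n | s ∈ nfold n (Atoms S)}

/-- The minimal factorization length `ℓ(s)`. -/
noncomputable def minLen (S : AddSubmonoid M) (s : M) : ℕ := sInf (Lset S s)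

/-- `X` is closed under intervals. -/
def ClosedUnderIntervals (X : Set M) : Prop :=
  ∀ u ∈ X, ∀ v ∈ X, u ≤ v → Set.Icc u v ⊆ X

/-- `a ≤_S b`, i.e. `b - a ∈ S`. -/
def dvdS (S : AddSubmonoid M) (a b : M) : Prop := ∃ t ∈ S, a + t = b

end Defs

/-!
A gap `h` lying below an element of `S*` lies below an atom: take an element `v` of `S*` above `h`
that is minimal for `≤`; were `v = s + t` with `s, t ∈ S*`, minimality would force `s ⊔ h = s + t`,
whence `t ≤ h` and `h ∈ S*`. Hence an element `x ∈ S*` that is a sum of two gaps, or of a gap and an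
atom, lies below a sum of two atoms, so `ℓ(x) ≤ 2` by monotonicity of `ℓ`, i.e. `x ∈ A ∪ (A + A)`.
-/

section Factorization

variable {M : Type*} [AddCommMonoid M] {S : AddSubmonoid M}

theorem nfold_eq_nsmul (X : Set M) : ∀ n, nfold n X = n • X
  | 0 => (zero_nsmul X).symm
  | n + 1 => by rw [nfold, nfold_eq_nsmul X n, succ_nsmul]

theorem add_mem_nfold_add {X : Set M} {m n : ℕ} {a b : M} (ha : a ∈ nfold m X)
    (hb : b ∈ nfold n X) : a + b ∈ nfold (m + n) X := by
  rw [nfold_eq_nsmul] at ha hb ⊢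
  rw [add_nsmul]
  exact Set.add_mem_add ha hb

variable [PartialOrder M] [CanonicallyOrderedAdd M]

theorem IsIdealExtension.mem_sstar_of_le (hS : IsIdealExtension S) {x y : M} (hx : x ∈ Sstar S)
    (hxy : x ≤ y) : y ∈ Sstar S := by
  obtain ⟨c, rfl⟩ := exists_add_of_le hxy
  exact hS x hx c

variable [IsOrderedCancelAddMonoid M] [WellFoundedLT M]

theorem exists_mem_nfold_atoms {s : M} (hs : s ∈ S) : ∃ n, s ∈ nfold n (Atoms S) := by
  induction s using WellFoundedLT.induction with
  | _ s ih =>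
    by_cases hs0 : s = 0
    · exact ⟨0, hs0⟩
    by_cases hsA : s ∈ Atoms S
    · exact ⟨1, by rwa [nfold_eq_nsmul, one_nsmul]⟩
    obtain ⟨u, hu, t, ht, rfl⟩ : s ∈ Sstar S + Sstar S := not_not.1 fun h => hsA ⟨⟨hs, hs0⟩, h⟩
    obtain ⟨m, hm⟩ := ih u (lt_add_of_pos_right u (pos_iff_ne_zero.2 ht.2)) hu.1
    obtain ⟨n, hn⟩ := ih t (lt_add_of_pos_left t (pos_iff_ne_zero.2 hu.2)) ht.1
    exact ⟨m + n, add_mem_nfold_add hm hn⟩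

theorem minLen_mem_Lset {s : M} (hs : s ∈ S) : minLen S s ∈ Lset S s :=
  Nat.sInf_mem (exists_mem_nfold_atoms hs)

theorem mem_atoms_or_add_of_minLen_le_two {s : M} (hs : s ∈ Sstar S) (h2 : minLen S s ≤ 2) :
    s ∈ Atoms S ∪ (Atoms S + Atoms S) := by
  have hmem : s ∈ nfold (minLen S s) (Atoms S) := minLen_mem_Lset hs.1
  rw [nfold_eq_nsmul] at hmem
  interval_cases minLen S s
  · exact absurd hmem hs.2
  · exact Or.inl (by rwa [one_nsmul] at hmem)
  · exact Or.inr (by rwa [two_nsmul] at hmem)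

theorem mem_atoms_or_add_of_le_add
    (hmono : ∀ s ∈ S, ∀ t ∈ S, s ≤ t → minLen S s ≤ minLen S t)
    {x a b : M} (hx : x ∈ Sstar S) (ha : a ∈ Atoms S) (hb : b ∈ Atoms S) (hle : x ≤ a + b) :
    x ∈ Atoms S ∪ (Atoms S + Atoms S) := by
  have hab : minLen S (a + b) ≤ 2 :=
    Nat.sInf_le (show a + b ∈ nfold 2 (Atoms S) by
      rw [nfold_eq_nsmul, two_nsmul]; exact Set.add_mem_add ha hb)
  exact mem_atoms_or_add_of_minLen_le_two hx
    ((hmono x hx.1 _ (S.add_mem ha.1.1 hb.1.1) hle).trans hab)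

end Factorization

theorem IsIdealExtension.exists_atom_ge {σ : Type*} {S : AddSubmonoid (σ →₀ ℕ)}
    (hS : IsIdealExtension S) {h u : σ →₀ ℕ} (hh : h ∉ S) (hu : u ∈ Sstar S) (hhu : h ≤ u) :
    ∃ v ∈ Atoms S, h ≤ v := by
  obtain ⟨v, hv, hmin⟩ :=
    wellFounded_lt.has_min {w | w ∈ Sstar S ∧ h ≤ w} ⟨u, hu, hhu⟩
  refine ⟨v, ⟨hv.1, ?_⟩, hv.2⟩
  rintro ⟨s, hs, t, ht, rfl⟩
  have hsup : s ⊔ h = s + t := (sup_le le_self_add hv.2).eq_of_not_lt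
    (hmin _ ⟨hS.mem_sstar_of_le hs le_sup_left, le_sup_right⟩)
  have hth : t ≤ h := fun i => by
    have := DFunLike.congr_fun hsup i
    simp only [Finsupp.sup_apply, Finsupp.add_apply] at this
    omega
  exact hh (hS.mem_sstar_of_le ht hth).1

theorem statement8_general (I : Set ℕ) (S : AddSubmonoid (↥I →₀ ℕ))
    (hS : IsIdealExtension S)
    (hmono : ∀ s ∈ S, ∀ t ∈ S, s ≤ t → minLen S s ≤ minLen S t) :
    IsGapAbsorbing S := by
  constructor
  · rintro _ ⟨h₁, hh₁, h₂, hh₂, rfl⟩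
    by_cases hx : h₁ + h₂ ∈ S
    · have hx' : h₁ + h₂ ∈ Sstar S :=
        ⟨hx, fun h0 => hh₁ ((add_eq_zero.1 (h0 : h₁ + h₂ = 0)).1 ▸ S.zero_mem)⟩
      obtain ⟨a, ha, h₁a⟩ := hS.exists_atom_ge hh₁ hx' le_self_add
      obtain ⟨b, hb, h₂b⟩ := hS.exists_atom_ge hh₂ hx' le_add_self
      exact (mem_atoms_or_add_of_le_add hmono hx' ha hb (add_le_add h₁a h₂b)).elim
        (Or.inl ∘ Or.inr) Or.inr
    · exact Or.inl (Or.inl hx)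
  · rintro _ ⟨h, hh, a, ha, rfl⟩
    have hx : h + a ∈ Sstar S := add_comm a h ▸ hS a ha.1 h
    obtain ⟨b, hb, hhb⟩ := hS.exists_atom_ge hh hx le_self_add
    exact mem_atoms_or_add_of_le_add hmono hx hb ha (add_le_add hhb le_rfl)

theorem statement8 (I : Set ℕ) (hI : I.Nonempty) (S : AddSubmonoid (↥I →₀ ℕ))
    (hS : IsIdealExtension S)
    (hmono : ∀ s ∈ S, ∀ t ∈ S, s ≤ t → minLen S s ≤ minLen S t) :
    IsGapAbsorbing S :=
  statement8_general I S hS hmono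
end

section
/- Let I be a nonempty set of non-negative integers and let S ⊆ ℕ^(I) be a gap absorbing monoid. Then the catenary degree of S satisfies c(S) ≤ 4. -/
open Pointwise

section Factorizations

variable {M : Type*} [AddCommMonoid M] [PartialOrder M]

/-- The element represented by a factorization, i.e. a finitely supported
function from the atoms to `ℕ`. -/
noncomputable def factSum (S : AddSubmonoid M) (z : ↥(Atoms S) →₀ ℕ) : M :=
  z.sum fun a n => n • (a : M)

/-- The set of factorizations of `s` into atoms of `S`. -/
noncomputable def Zset (S : AddSubmonoid M) (s : M) : Set (↥(Atoms S) →₀ ℕ) :=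
  {z | factSum S z = s}

end Factorizations

section Distance

/-- Length of a factorization. -/
def flen {α : Type*} (z : α →₀ ℕ) : ℕ := z.sum fun _ n => n

/-- Distance between two factorizations:
`d(u,v) = max (|u - u ⊓ v|, |v - u ⊓ v|)`. -/
noncomputable def fdist {α : Type*} (u v : α →₀ ℕ) : ℕ :=
  max (flen (u - u ⊓ v)) (flen (v - u ⊓ v))

/-!
Gap absorption forces `S* + ℕ^(I) ⊆ S*`, so every part of an atom is `0`, a gap or an atom,
and every element below a sum of `k` atoms is a gap or a sum of at most `k` atoms.

To join factorizations `u` and `v` of `s`, pick an atom `b` of `v`: it suffices to move `u`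
by steps of distance at most `4` to a factorization containing `b`, and to recurse on `s - b`.
Let `y` be a subfactorization of `u` with `b` below its sum. If `|y| ≤ 3`, one step replaces `y`
(together with one further atom absorbing the gap `∑ y - b`, if it is one) by `b` and a short
factorization of the rest. Otherwise write `y = y₃ + y₄` with `|y₃| = 3` and let `γ` be the part
of `b` below `∑ y₃`. Since `γ` is `0`, a gap or an atom, one step refactors `y₃` as `w₁ + w₂`
with `|w₁ + w₂| ≤ 4`, `|w₁| ≤ 2` and `γ ≤ ∑ w₁`, so `b` lies below the sum of the shorter
`w₁ + y₄`.
-/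

open Finsupp Relation

theorem Relation.ReflTransGen.exists_seq {α : Type*} {r : α → α → Prop} {a b : α}
    (h : ReflTransGen r a b) :
    ∃ (n : ℕ) (f : ℕ → α), f 0 = a ∧ f n = b ∧ ∀ i < n, r (f i) (f (i + 1)) := by
  induction h with
  | refl => exact ⟨0, fun _ => a, rfl, rfl, by simp⟩
  | @tail b c _ hbc ih =>
    obtain ⟨n, f, h0, hn, hr⟩ := ih
    refine ⟨n + 1, Function.update f (n + 1) c, by simpa using h0, by simp, fun i hi => ?_⟩
    rcases Nat.lt_succ_iff_lt_or_eq.mp hi with hi | rfl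
    · simpa [Function.update_of_ne (show i ≠ n + 1 by omega),
        Function.update_of_ne (show i + 1 ≠ n + 1 by omega)] using hr i hi
    · simpa [Function.update_of_ne (show i ≠ i + 1 by omega), hn] using hbc

namespace Finsupp

variable {α : Type*}

theorem exists_eq_add_of_le_add {x u v : α →₀ ℕ} (h : x ≤ u + v) :
    ∃ x₁ x₂, x = x₁ + x₂ ∧ x₁ ≤ u ∧ x₂ ≤ v := by
  refine ⟨x ⊓ u, x - x ⊓ u, (add_tsub_cancel_of_le inf_le_left).symm, inf_le_right, ?_⟩
  intro i
  have := h i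
  simp only [tsub_apply, inf_apply, add_apply] at *
  omega

theorem exists_eq_single_one_add {z : α →₀ ℕ} (hz : z ≠ 0) : ∃ a w, z = single a 1 + w := by
  obtain ⟨a, ha⟩ := Finsupp.ne_iff.mp hz
  exact ⟨a, z - single a 1, (add_tsub_cancel_of_le (single_le_iff.mpr (by simpa
    [Nat.one_le_iff_ne_zero] using ha))).symm⟩

theorem degree_single_one_add (a : α) (w : α →₀ ℕ) : (single a 1 + w).degree = w.degree + 1 := by
  rw [map_add, degree_single, add_comm]

end Finsupp

theorem fdist_add_left {α : Type*} (u v w : α →₀ ℕ) : fdist (w + u) (w + v) = fdist u v := by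
  have hinf : (w + u) ⊓ (w + v) = w + u ⊓ v := by
    ext i; simp only [Finsupp.inf_apply, Finsupp.add_apply]; omega
  simp only [fdist, hinf, add_tsub_add_eq_tsub_left]

-- `flen` is definitionally `Finsupp.degree`.
theorem fdist_le_max_degree {α : Type*} (u v : α →₀ ℕ) : fdist u v ≤ max u.degree v.degree :=
  max_le_max (degree_mono tsub_le_self) (degree_mono tsub_le_self)

section GapAbsorbing

variable {σ : Type*} {S : AddSubmonoid (σ →₀ ℕ)}

theorem factSum_add (u v : ↥(Atoms S) →₀ ℕ) : factSum S (u + v) = factSum S u + factSum S v :=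
  sum_add_index' (by simp) (fun _ _ _ => add_smul _ _ _)

@[simp]
theorem factSum_single (a : ↥(Atoms S)) (n : ℕ) : factSum S (single a n) = n • (a : σ →₀ ℕ) :=
  sum_single_index (zero_smul _ _)

@[simp]
theorem factSum_zero : factSum S 0 = 0 := sum_zero_index

theorem factSum_mem (w : ↥(Atoms S) →₀ ℕ) : factSum S w ∈ S :=
  S.sum_mem fun a _ => S.nsmul_mem a.2.1.1 _

theorem factSum_eq_zero_iff {w : ↥(Atoms S) →₀ ℕ} : factSum S w = 0 ↔ w = 0 := by
  refine ⟨fun h => by_contra fun hw => ?_, fun h => h ▸ factSum_zero⟩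
  obtain ⟨a, w', rfl⟩ := exists_eq_single_one_add hw
  rw [factSum_add, factSum_single, one_smul] at h
  exact a.2.1.2 (add_eq_zero.mp h).1

theorem ne_zero_of_le_factSum {t : σ →₀ ℕ} {w : ↥(Atoms S) →₀ ℕ} (ht : t ≠ 0)
    (h : t ≤ factSum S w) : w ≠ 0 := by
  rintro rfl
  exact ht (le_antisymm (by simpa using h) zero_le)

theorem add_mem_sstar {s x : σ →₀ ℕ} (hs : s ∈ Sstar S) (hx : x ∈ S) : s + x ∈ Sstar S :=
  ⟨S.add_mem hs.1 hx, fun h => hs.2 (add_eq_zero.mp h).1⟩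

theorem IsGapAbsorbing.isIdealExtension (hS : IsGapAbsorbing S) : IsIdealExtension S := by
  intro s hs x
  by_cases hx : x ∈ S
  · exact add_mem_sstar hs hx
  induction s using WellFoundedLT.induction with
  | _ s ih =>
  by_cases hA : s ∈ Atoms S
  · rw [add_comm]
    rcases hS.2 (Set.add_mem_add hx hA) with h | ⟨a, ha, a', ha', h⟩
    · exact h.1
    · exact h ▸ add_mem_sstar ha.1 ha'.1.1
  · obtain ⟨u, hu, v, hv, rfl⟩ : s ∈ Sstar S + Sstar S :=
      not_not.mp fun h => hA ⟨hs, h⟩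
    rw [add_right_comm]
    exact add_mem_sstar (ih u (lt_add_of_pos_right u (pos_iff_ne_zero.mpr hv.2)) hu) hv.1

theorem IsGapAbsorbing.mem_atoms_of_le (hS : IsGapAbsorbing S) {a x : σ →₀ ℕ}
    (ha : a ∈ Atoms S) (hxa : x ≤ a) (hx : x ∈ Sstar S) : x ∈ Atoms S := by
  refine ⟨hx, fun ⟨u, hu, v, hv, huv⟩ => ha.2 ?_⟩
  obtain ⟨e, rfl⟩ := exists_add_of_le hxa
  exact ⟨u, hu, v + e, hS.isIdealExtension v hv e, by rw [← huv, add_assoc]⟩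

def HasShortFactorization (S : AddSubmonoid (σ →₀ ℕ)) (x : σ →₀ ℕ) (n : ℕ) : Prop :=
  ∃ w : ↥(Atoms S) →₀ ℕ, factSum S w = x ∧ w.degree ≤ n

theorem HasShortFactorization.mono {x : σ →₀ ℕ} {m n : ℕ} (h : HasShortFactorization S x m)
    (hmn : m ≤ n) : HasShortFactorization S x n :=
  let ⟨w, hw, hl⟩ := h; ⟨w, hw, hl.trans hmn⟩

theorem HasShortFactorization.add {x y : σ →₀ ℕ} {m n : ℕ} (hx : HasShortFactorization S x m)
    (hy : HasShortFactorization S y n) : HasShortFactorization S (x + y) (m + n) :=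
  let ⟨u, hu, hul⟩ := hx
  let ⟨v, hv, hvl⟩ := hy
  ⟨u + v, by rw [factSum_add, hu, hv], by rw [map_add]; omega⟩

theorem hasShortFactorization_zero : HasShortFactorization S 0 0 := ⟨0, factSum_zero, le_rfl⟩

theorem hasShortFactorization_of_mem_atoms {a : σ →₀ ℕ} (ha : a ∈ Atoms S) :
    HasShortFactorization S a 1 :=
  ⟨single ⟨a, ha⟩ 1, by simp, by simp⟩

theorem hasShortFactorization_of_mem_atoms_add_atoms {x : σ →₀ ℕ}
    (hx : x ∈ Atoms S ∪ (Atoms S + Atoms S)) : HasShortFactorization S x 2 := by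
  rcases hx with hx | ⟨a, ha, a', ha', rfl⟩
  · exact (hasShortFactorization_of_mem_atoms hx).mono one_le_two
  · exact (hasShortFactorization_of_mem_atoms ha).add (hasShortFactorization_of_mem_atoms ha')

theorem IsGapAbsorbing.hasShortFactorization_gap_add_atom (hS : IsGapAbsorbing S)
    {h a : σ →₀ ℕ} (hh : h ∉ S) (ha : a ∈ Atoms S) : HasShortFactorization S (h + a) 2 :=
  hasShortFactorization_of_mem_atoms_add_atoms (hS.2 (Set.add_mem_add hh ha))

theorem IsGapAbsorbing.hasShortFactorization_gap_add {h x : σ →₀ ℕ} {n : ℕ}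
    (hS : IsGapAbsorbing S) (hh : h ∉ S) (hx : HasShortFactorization S x n) (hx0 : x ≠ 0) :
    HasShortFactorization S (h + x) (n + 1) := by
  obtain ⟨w, rfl, hw⟩ := hx
  obtain ⟨a, w', rfl⟩ := exists_eq_single_one_add (mt factSum_eq_zero_iff.mpr hx0)
  rw [factSum_add, factSum_single, one_smul, ← add_assoc]
  refine ((hS.hasShortFactorization_gap_add_atom hh a.2).add ⟨w', rfl, le_rfl⟩).mono ?_
  rw [degree_single_one_add] at hw
  omega

theorem IsGapAbsorbing.gap_or_short_add (hS : IsGapAbsorbing S) {x y : σ →₀ ℕ} {m n : ℕ}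
    (hm : 1 ≤ m) (hn : 1 ≤ n) (hx : x ∉ S ∨ HasShortFactorization S x m)
    (hy : y ∉ S ∨ HasShortFactorization S y n) :
    x + y ∉ S ∨ HasShortFactorization S (x + y) (m + n) := by
  have gap_add {h z : σ →₀ ℕ} {k l : ℕ} (hh : h ∉ S) (hz : HasShortFactorization S z k)
      (hl : 1 ≤ l) : h + z ∉ S ∨ HasShortFactorization S (h + z) (l + k) := by
    by_cases hz0 : z = 0
    · exact .inl (by rwa [hz0, add_zero])
    · exact .inr ((hS.hasShortFactorization_gap_add hh hz hz0).mono (by omega))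
  rcases hx with hx | hx <;> rcases hy with hy | hy
  · rcases hS.1 (Set.add_mem_add hx hy) with (h | h) | h
    · exact .inl h
    · exact .inr (((hasShortFactorization_of_mem_atoms h).mono one_le_two).mono (by omega))
    · exact .inr ((hasShortFactorization_of_mem_atoms_add_atoms (.inr h)).mono (by omega))
  · exact gap_add hx hy hm
  · rw [add_comm, add_comm m]; exact gap_add hy hx hn
  · exact .inr (hx.add hy)

theorem IsGapAbsorbing.eq_zero_or_gap_or_mem_atoms_of_le (hS : IsGapAbsorbing S)
    {a x : σ →₀ ℕ} (ha : a ∈ Atoms S) (hxa : x ≤ a) : x = 0 ∨ x ∉ S ∨ x ∈ Atoms S := by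
  by_cases hx0 : x = 0
  · exact .inl hx0
  by_cases hx : x ∈ S
  · exact .inr (.inr (hS.mem_atoms_of_le ha hxa ⟨hx, hx0⟩))
  · exact .inr (.inl hx)

theorem IsGapAbsorbing.gap_or_short_of_le_atom (hS : IsGapAbsorbing S) {a x : σ →₀ ℕ}
    (ha : a ∈ Atoms S) (hxa : x ≤ a) : x ∉ S ∨ HasShortFactorization S x 1 := by
  rcases hS.eq_zero_or_gap_or_mem_atoms_of_le ha hxa with rfl | hx | hx
  · exact .inr (hasShortFactorization_zero.mono zero_le_one)
  · exact .inl hx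
  · exact .inr (hasShortFactorization_of_mem_atoms hx)

theorem IsGapAbsorbing.gap_or_short_of_le_factSum (hS : IsGapAbsorbing S) {t : σ →₀ ℕ}
    {w : ↥(Atoms S) →₀ ℕ} (ht : t ≤ factSum S w) :
    t ∉ S ∨ HasShortFactorization S t w.degree := by
  induction hn : w.degree generalizing w t with
  | zero =>
    obtain rfl := (degree_eq_zero_iff w).mp hn
    obtain rfl : t = 0 := le_antisymm (by simpa using ht) zero_le
    exact .inr hasShortFactorization_zero
  | succ n ih =>
    obtain ⟨a, w', rfl⟩ := exists_eq_single_one_add (z := w) (by rintro rfl; simp at hn)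
    rw [degree_single_one_add] at hn
    rw [factSum_add, factSum_single, one_smul] at ht
    obtain ⟨t₁, t₂, rfl, ht₁, ht₂⟩ := exists_eq_add_of_le_add ht
    have h₁ := hS.gap_or_short_of_le_atom a.2 ht₁
    by_cases hw' : w' = 0
    · obtain rfl : t₂ = 0 := le_antisymm (by simpa [hw'] using ht₂) zero_le
      rw [add_zero]
      exact h₁.imp_right (·.mono (by omega))
    · have hn' : 1 ≤ n := by
        rw [← Nat.succ_inj.mp hn, Nat.one_le_iff_ne_zero, Ne, degree_eq_zero_iff]; exact hw'
      rw [add_comm n]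
      exact hS.gap_or_short_add le_rfl hn' h₁ (ih ht₂ (Nat.succ_inj.mp hn))

def CatenaryStep (S : AddSubmonoid (σ →₀ ℕ)) (u v : ↥(Atoms S) →₀ ℕ) : Prop :=
  factSum S u = factSum S v ∧ fdist u v ≤ 4

theorem CatenaryStep.add_left {u v : ↥(Atoms S) →₀ ℕ} (h : CatenaryStep S u v)
    (w : ↥(Atoms S) →₀ ℕ) : CatenaryStep S (w + u) (w + v) :=
  ⟨by rw [factSum_add, factSum_add, h.1], (fdist_add_left u v w).symm ▸ h.2⟩

theorem catenaryStep_of_degree_le {u v : ↥(Atoms S) →₀ ℕ} (h : factSum S u = factSum S v)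
    (hu : u.degree ≤ 4) (hv : v.degree ≤ 4) : CatenaryStep S u v :=
  ⟨h, (fdist_le_max_degree u v).trans (max_le hu hv)⟩

theorem factSum_eq_of_reflTransGen {u v : ↥(Atoms S) →₀ ℕ}
    (h : ReflTransGen (CatenaryStep S) u v) : factSum S u = factSum S v := by
  induction h with
  | refl => rfl
  | tail _ hstep ih => exact ih.trans hstep.1

theorem IsGapAbsorbing.exists_catenaryStep_single_add (hS : IsGapAbsorbing S) {b q : σ →₀ ℕ}
    (hb : b ∈ Atoms S) (hq : q ∈ S) {y z : ↥(Atoms S) →₀ ℕ} (hz : factSum S z = b + q)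
    (hyz : y ≤ z) (hy : y.degree ≤ 3) (hby : b ≤ factSum S y) :
    ∃ z', CatenaryStep S z (single ⟨b, hb⟩ 1 + z') := by
  obtain ⟨t, ht⟩ := exists_add_of_le hby
  obtain ⟨r, rfl⟩ := le_iff_exists_add'.mp hyz
  rcases hS.gap_or_short_of_le_factSum (le_add_self.trans_eq ht.symm) with ht' | ⟨w, hw, hwl⟩
  · have hr : r ≠ 0 := by
      rintro rfl
      rw [zero_add] at hz
      exact ht' (add_left_cancel (hz.symm.trans ht) ▸ hq)
    obtain ⟨a, r', rfl⟩ := exists_eq_single_one_add hr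
    obtain ⟨w, hw, hwl⟩ := hS.hasShortFactorization_gap_add_atom ht' a.2
    have hstep : CatenaryStep S (single a 1 + y) (single ⟨b, hb⟩ 1 + w) :=
      catenaryStep_of_degree_le
        (by simp only [factSum_add, factSum_single, one_smul, hw, ht]; abel)
        (by rw [degree_single_one_add]; omega) (by rw [degree_single_one_add]; omega)
    exact ⟨w + r', by convert hstep.add_left r' using 1 <;> abel⟩
  · have hstep : CatenaryStep S y (single ⟨b, hb⟩ 1 + w) :=
      catenaryStep_of_degree_le (by simp only [factSum_add, factSum_single, one_smul, hw, ht])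
        (by omega) (by rw [degree_single_one_add]; omega)
    exact ⟨w + r, by convert hstep.add_left r using 1; abel⟩

theorem IsGapAbsorbing.exists_refactorization (hS : IsGapAbsorbing S) {b γ : σ →₀ ℕ}
    (hb : b ∈ Atoms S) (hγb : γ ≤ b) {y : ↥(Atoms S) →₀ ℕ} (hγy : γ ≤ factSum S y) :
    ∃ w₁ w₂ : ↥(Atoms S) →₀ ℕ, factSum S (w₁ + w₂) = factSum S y ∧ γ ≤ factSum S w₁ ∧
      w₁.degree ≤ 2 ∧ (w₁ + w₂).degree ≤ y.degree + 1 := by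
  by_cases hγ0 : γ = 0
  · exact ⟨0, y, by simp, by simp [hγ0], by simp, by simp⟩
  obtain ⟨δ, hδ⟩ := exists_add_of_le hγy
  have hyS : γ + δ ∈ S := hδ ▸ factSum_mem y
  rcases hS.gap_or_short_of_le_factSum (le_add_self.trans_eq hδ.symm) with hδS | ⟨w, hw, hwl⟩
  · obtain ⟨w, hw, hwl⟩ := (hS.gap_or_short_add le_rfl le_rfl
      (hS.gap_or_short_of_le_atom hb hγb) (.inl hδS)).resolve_left (not_not.mpr hyS)
    have hy : y ≠ 0 := ne_zero_of_le_factSum (t := δ) (fun h => hδS (h ▸ S.zero_mem))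
      (le_add_self.trans_eq hδ.symm)
    have := (degree_eq_zero_iff y).not.mpr hy
    exact ⟨w, 0, by rw [add_zero, hw, hδ], hw ▸ le_self_add, hwl, by rw [add_zero]; omega⟩
  rcases hS.eq_zero_or_gap_or_mem_atoms_of_le hb hγb with hγ | hγS | hγA
  · exact absurd hγ hγ0
  · -- the gap `γ` is absorbed by the first atom of the factorization of `δ`
    have hw0 : w ≠ 0 := by
      rintro rfl
      rw [factSum_zero] at hw
      exact hγS (by rwa [← hw, add_zero] at hyS)
    obtain ⟨a, w', rfl⟩ := exists_eq_single_one_add hw0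
    obtain ⟨w₁, hw₁, hw₁l⟩ := hS.hasShortFactorization_gap_add_atom hγS a.2
    rw [degree_single_one_add] at hwl
    refine ⟨w₁, w', ?_, hw₁ ▸ le_self_add, hw₁l, by rw [map_add]; omega⟩
    rw [factSum_add, hw₁, hδ, ← hw, factSum_add, factSum_single, one_smul, add_assoc]
  · refine ⟨single ⟨γ, hγA⟩ 1, w, by rw [factSum_add, hw, hδ]; simp, by simp, by simp, ?_⟩
    rw [degree_single_one_add]
    omega

theorem IsGapAbsorbing.exists_reflTransGen_single_add (hS : IsGapAbsorbing S) {b q : σ →₀ ℕ}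
    (hb : b ∈ Atoms S) (hq : q ∈ S) {y z : ↥(Atoms S) →₀ ℕ} (hz : factSum S z = b + q)
    (hyz : y ≤ z) (hby : b ≤ factSum S y) :
    ∃ z', ReflTransGen (CatenaryStep S) z (single ⟨b, hb⟩ 1 + z') := by
  induction hn : y.degree using Nat.strong_induction_on generalizing y z with
  | _ n ih =>
  by_cases hn3 : n ≤ 3
  · obtain ⟨z', hstep⟩ := hS.exists_catenaryStep_single_add hb hq hz hyz (hn ▸ hn3) hby
    exact ⟨z', .single hstep⟩
  obtain ⟨y₃, hy₃, hy₃l⟩ := exists_le_degree_eq y 3 (by omega)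
  obtain ⟨y₄, rfl⟩ := exists_add_of_le hy₃
  obtain ⟨r, rfl⟩ := le_iff_exists_add'.mp hyz
  rw [factSum_add] at hby
  obtain ⟨γ, ρ, rfl, hγ, hρ⟩ := exists_eq_add_of_le_add hby
  obtain ⟨w₁, w₂, hw, hγw, hw₁l, hwl⟩ := hS.exists_refactorization hb le_self_add hγ
  have hstep : CatenaryStep S (r + y₄ + y₃) (r + y₄ + (w₁ + w₂)) :=
    (catenaryStep_of_degree_le hw.symm (by omega) (by omega)).add_left _
  rw [show r + (y₃ + y₄) = r + y₄ + y₃ by abel] at hz ⊢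
  rw [map_add] at hn
  obtain ⟨z', hz'⟩ := ih (w₁ + y₄).degree (by rw [map_add]; omega) (y := w₁ + y₄)
    (hstep.1 ▸ hz) (le_iff_exists_add.mpr ⟨r + w₂, by abel⟩)
    (by rw [factSum_add]; exact add_le_add hγw hρ) rfl
  exact ⟨z', .head hstep hz'⟩

theorem IsGapAbsorbing.reflTransGen_catenaryStep (hS : IsGapAbsorbing S)
    {u v : ↥(Atoms S) →₀ ℕ} (h : factSum S u = factSum S v) :
    ReflTransGen (CatenaryStep S) u v := by
  induction hn : v.degree generalizing u v with
  | zero =>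
    obtain rfl := (degree_eq_zero_iff v).mp hn
    obtain rfl := factSum_eq_zero_iff.mp (h.trans factSum_zero)
    exact .refl
  | succ n ih =>
    obtain ⟨⟨b, hb⟩, v₀, rfl⟩ := exists_eq_single_one_add (z := v) (by rintro rfl; simp at hn)
    rw [factSum_add, factSum_single, one_smul] at h
    obtain ⟨u₀, hu⟩ := hS.exists_reflTransGen_single_add hb (factSum_mem v₀) h le_rfl
      (le_self_add.trans_eq h.symm)
    have hu₀ : factSum S u₀ = factSum S v₀ := by
      have := (factSum_eq_of_reflTransGen hu).symm.trans h
      rwa [factSum_add, factSum_single, one_smul, add_right_inj] at this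
    rw [degree_single_one_add, Nat.succ_inj] at hn
    exact hu.trans ((ih hu₀ hn).lift _ fun _ _ hstep => hstep.add_left _)

end GapAbsorbing

theorem statement13_general (I : Set ℕ) (S : AddSubmonoid (↥I →₀ ℕ))
    (hS : IsGapAbsorbing S) :
    ∀ s ∈ S, ∀ u ∈ Zset S s, ∀ v ∈ Zset S s,
      ∃ (n : ℕ) (f : ℕ → (↥(Atoms S) →₀ ℕ)),
        f 0 = u ∧ f n = v ∧ (∀ i ≤ n, f i ∈ Zset S s) ∧
        ∀ i < n, fdist (f i) (f (i + 1)) ≤ 4 := by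
  intro s _ u hu v hv
  obtain ⟨n, f, hf0, hfn, hf⟩ := (hS.reflTransGen_catenaryStep (hu.trans hv.symm)).exists_seq
  refine ⟨n, f, hf0, hfn, fun i hi => ?_, fun i hi => (hf i hi).2⟩
  induction i with
  | zero => exact hf0 ▸ hu
  | succ i ih => exact ((hf i hi).1.symm.trans (ih (by omega)) : factSum S _ = s)

theorem statement13 (I : Set ℕ) (hI : I.Nonempty) (S : AddSubmonoid (↥I →₀ ℕ))
    (hS : IsGapAbsorbing S) :
    ∀ s ∈ S, ∀ u ∈ Zset S s, ∀ v ∈ Zset S s,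
      ∃ (n : ℕ) (f : ℕ → (↥(Atoms S) →₀ ℕ)),
        f 0 = u ∧ f n = v ∧ (∀ i ≤ n, f i ∈ Zset S s) ∧
        ∀ i < n, fdist (f i) (f (i + 1)) ≤ 4 :=
  statement13_general I S hS
end Distance
end
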